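/- For the Gaussian output channel P_out(y|λ) = exp(−(y−λ)²/(2Δ))/√(2πΔ), the replica-symmetric energetic potential φ(K; K_d) = ∫ dy E_{ξ,u⁰} P_out(y | ξ√K + u⁰√(K_d−K)) · ln E_u P_out(y | ξ√K + u√(K_d−K)), with ξ, u⁰, u i.i.d. N(0,1), equals −(1/2) ln[2πe(Δ + K_d − K)] for 0 ≤ K ≤ K_d. -/

import Mathlib

/-!
Averaging the Gaussian likelihood over `u ~ N(0,1)` is a Gaussian convolution: given `ξ`, the
output `y` is `N(ξ√K, Δ + K_d - K)`. So the logarithm is taken of exactly the density that the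
outer average over `u⁰` produces, and after Fubini the integral over `y` is, for every `ξ`, minus
the differential entropy `½ log(2πe(Δ + K_d - K))` of that normal law.
-/

open MeasureTheory ProbabilityTheory Real
open scoped NNReal

namespace ProbabilityTheory

variable {μ : ℝ} {v : ℝ≥0}

lemma log_gaussianPDFReal (hv : v ≠ 0) (x : ℝ) :
    log (gaussianPDFReal μ v x) = -(1 / 2) * log (2 * π * v) - (x - μ) ^ 2 / (2 * v) := by
  rw [gaussianPDFReal, log_mul (by positivity) (exp_ne_zero _), log_inv, log_exp,
    log_sqrt (by positivity)]
  ring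

lemma integrable_gaussianReal_iff {f : ℝ → ℝ} (hv : v ≠ 0) :
    Integrable f (gaussianReal μ v) ↔ Integrable (fun x => gaussianPDFReal μ v x * f x) := by
  rw [gaussianReal_of_var_ne_zero _ hv, gaussianPDF_def,
    integrable_withDensity_iff_integrable_smul' (by fun_prop) (by simp)]
  simp [ENNReal.toReal_ofReal (gaussianPDFReal_nonneg _ _ _)]

lemma integrable_log_gaussianPDFReal_comp (hv : v ≠ 0) {ν : Measure ℝ} [IsFiniteMeasure ν]
    {f g : ℝ → ℝ} (hf : MemLp f 2 ν) (hg : MemLp g 2 ν) :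
    Integrable (fun x => log (gaussianPDFReal (f x) v (g x))) ν := by
  simp_rw [log_gaussianPDFReal hv]
  exact (integrable_const _).sub ((hg.sub hf).integrable_sq.div_const _)

lemma integrable_gaussianPDFReal_mul_log (hv : v ≠ 0) :
    Integrable (fun x => gaussianPDFReal μ v x * log (gaussianPDFReal μ v x)) :=
  (integrable_gaussianReal_iff hv).1 <|
    integrable_log_gaussianPDFReal_comp hv (memLp_const μ) (memLp_id_gaussianReal 2)

lemma integral_gaussianPDFReal_mul_log (hv : v ≠ 0) :
    ∫ x, gaussianPDFReal μ v x * log (gaussianPDFReal μ v x)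
      = -(1 / 2) * log (2 * π * exp 1 * v) := by
  have hvar : ∫ x, (x - μ) ^ 2 ∂gaussianReal μ v = v := by
    simpa [variance_eq_integral measurable_id'.aemeasurable] using
      variance_fun_id_gaussianReal (μ := μ) (v := v)
  have hsq : Integrable (fun x => (x - μ) ^ 2) (gaussianReal μ v) :=
    ((memLp_id_gaussianReal 2).sub (memLp_const μ)).integrable_sq
  have hv₀ : (v : ℝ) ≠ 0 := by simpa using hv
  calc ∫ x, gaussianPDFReal μ v x * log (gaussianPDFReal μ v x)
      = ∫ x, log (gaussianPDFReal μ v x) ∂gaussianReal μ v :=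
        (integral_gaussianReal_eq_integral_smul hv).symm
    _ = -(1 / 2) * log (2 * π * v) - v / (2 * v) := by
        simp_rw [log_gaussianPDFReal hv]
        rw [integral_sub (integrable_const _) (hsq.div_const _), integral_const, integral_div,
          hvar, probReal_univ, one_smul]
    _ = -(1 / 2) * log (2 * π * exp 1 * v) := by
        rw [mul_right_comm _ (exp 1), log_mul (by positivity) (exp_ne_zero 1), log_exp]
        field_simp
        ring

/-- Bayes' rule for the prior `u ~ N(0,1)` and the observation `c ~ N(u√w, v)`: joint density
equals evidence `N(0, v + w)` times posterior `N(c√w/(v+w), v/(v+w))`. -/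
lemma gaussianPDFReal_mul_gaussianPDFReal (hv : v ≠ 0) (w : ℝ≥0) (u c : ℝ) :
    gaussianPDFReal 0 1 u * gaussianPDFReal (u * √w) v c
      = gaussianPDFReal 0 (v + w) c * gaussianPDFReal (c * √w / (v + w)) (v / (v + w)) u := by
  have hvw : (0 : ℝ) < v + w := by positivity
  have hsqrt : √(2 * π * 1) * √(2 * π * v) = √(2 * π * (v + w)) * √(2 * π * (v / (v + w))) := by
    rw [← sqrt_mul (by positivity), ← sqrt_mul (by positivity)]
    congr 1
    field_simp
  have hexp : -(u - 0) ^ 2 / (2 * 1) + -(c - u * √w) ^ 2 / (2 * v)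
      = -(c - 0) ^ 2 / (2 * (v + w)) + -(u - c * √w / (v + w)) ^ 2 / (2 * (v / (v + w))) := by
    obtain ⟨s, hs⟩ : ∃ s, √(w : ℝ) = s := ⟨_, rfl⟩
    have hw : (w : ℝ) = s ^ 2 := by rw [← hs, sq_sqrt w.coe_nonneg]
    rw [hs, hw] at *
    field_simp
    ring
  have hprod : ∀ a b c d : ℝ, a⁻¹ * exp c * (b⁻¹ * exp d) = (a * b)⁻¹ * exp (c + d) := by
    intros
    rw [exp_add, mul_inv]
    ring
  simp only [gaussianPDFReal, NNReal.coe_one, NNReal.coe_add, NNReal.coe_div]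
  rw [hprod, hprod, hexp, hsqrt]

lemma integral_gaussianPDFReal_add_mul_sqrt (hv : v ≠ 0) (w : ℝ≥0) (a y : ℝ) :
    ∫ u, gaussianPDFReal (a + u * √w) v y ∂gaussianReal 0 1 = gaussianPDFReal a (v + w) y := by
  have hvw : v / (v + w) ≠ 0 := by positivity
  have hshift : ∀ u, gaussianPDFReal (a + u * √w) v y = gaussianPDFReal (u * √w) v (y - a) :=
    fun u => by rw [gaussianPDFReal_sub, add_comm]
  simp_rw [integral_gaussianReal_eq_integral_smul one_ne_zero, smul_eq_mul, hshift,
    gaussianPDFReal_mul_gaussianPDFReal hv, integral_const_mul,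
    integral_gaussianPDFReal_eq_one _ hvw, mul_one, gaussianPDFReal_sub, zero_add]

lemma gaussianPDFReal_le (x : ℝ) :
    gaussianPDFReal μ v x ≤ (√(2 * π * v))⁻¹ := by
  rw [gaussianPDFReal]
  refine mul_le_of_le_one_right (by positivity) (exp_le_one_iff.2 ?_)
  exact div_nonpos_of_nonpos_of_nonneg (neg_nonpos.2 (sq_nonneg _)) (by positivity)

lemma integral_prod_gaussianPDFReal_add_mul_sqrt (hv : v ≠ 0) (w : ℝ≥0) {ν : Measure ℝ}
    [IsFiniteMeasure ν] {g h : ℝ → ℝ} (hg : Measurable g) (hh : Integrable h ν) (y : ℝ) :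
    ∫ p : ℝ × ℝ, gaussianPDFReal (g p.1 + p.2 * √w) v y * h p.1 ∂ν.prod (gaussianReal 0 1)
      = ∫ ξ, gaussianPDFReal (g ξ) (v + w) y * h ξ ∂ν := by
  have hint : Integrable (fun p : ℝ × ℝ => gaussianPDFReal (g p.1 + p.2 * √w) v y * h p.1)
      (ν.prod (gaussianReal 0 1)) := by
    refine (hh.comp_fst _).bdd_mul (c := (√(2 * π * v))⁻¹) ?_ (ae_of_all _ fun p => ?_)
    · exact (measurable_uncurry_gaussianPDFReal.comp (by fun_prop :
        Measurable fun p : ℝ × ℝ => (g p.1 + p.2 * √w, v, y))).aestronglyMeasurable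
    · rw [Real.norm_of_nonneg (gaussianPDFReal_nonneg _ _ _)]
      exact gaussianPDFReal_le _
  rw [integral_prod _ hint]
  simp_rw [integral_mul_const, integral_gaussianPDFReal_add_mul_sqrt hv]

lemma integral_integral_comp_sub {ν : Measure ℝ} [IsProbabilityMeasure ν] {F g : ℝ → ℝ}
    (hF : Integrable F) (hFm : Measurable F) (hg : Measurable g) :
    ∫ y, ∫ ξ, F (y - g ξ) ∂ν = ∫ t, F t := by
  have hint : Integrable (Function.uncurry fun y ξ => F (y - g ξ)) (volume.prod ν) := by
    refine (integrable_prod_iff' ?_).2 ⟨ae_of_all _ fun ξ => hF.comp_sub_right (g ξ), ?_⟩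
    · exact (hFm.comp (measurable_fst.sub (hg.comp measurable_snd))).aestronglyMeasurable
    · simp_rw [Function.uncurry_apply_pair, integral_sub_right_eq_self (fun t => ‖F t‖)]
      exact integrable_const _
  rw [integral_integral_swap hint]
  simp_rw [integral_sub_right_eq_self F, integral_const, probReal_univ, one_smul]

end ProbabilityTheory

theorem gaussian_channel_energetic_potential_general (Δ K Kd : ℝ)
    (hΔ : 0 < Δ) (hKKd : K ≤ Kd) :
    let Pout : ℝ → ℝ → ℝ :=
      fun y lam => Real.exp (-(y - lam) ^ 2 / (2 * Δ)) / Real.sqrt (2 * Real.pi * Δ)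
    ∫ y : ℝ, ∫ p : ℝ × ℝ,
        Pout y (p.1 * Real.sqrt K + p.2 * Real.sqrt (Kd - K)) *
          Real.log (∫ u, Pout y (p.1 * Real.sqrt K + u * Real.sqrt (Kd - K))
            ∂(gaussianReal 0 1))
      ∂((gaussianReal 0 1).prod (gaussianReal 0 1))
      = -(1 / 2) * Real.log (2 * Real.pi * Real.exp 1 * (Δ + Kd - K)) := by
  intro Pout
  set v := Δ.toNNReal
  set w := (Kd - K).toNNReal
  have hv : v ≠ 0 := by simpa [v] using hΔ
  have hPout : Pout = fun y lam => gaussianPDFReal lam v y := by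
    ext y lam
    simp [Pout, gaussianPDFReal, v, hΔ.le, div_eq_inv_mul]
  have hsqrt : √(Kd - K) = √w := by simp [w, hKKd]
  have hvw : ((v + w : ℝ≥0) : ℝ) = Δ + Kd - K := by
    simp [v, w, hΔ.le, hKKd]
    ring
  have hV : v + w ≠ 0 := (add_pos_of_pos_of_nonneg (pos_iff_ne_zero.2 hv) w.2).ne'
  have hfubini : ∀ y, ∫ p : ℝ × ℝ, gaussianPDFReal (p.1 * √K + p.2 * √w) v y *
        log (gaussianPDFReal (p.1 * √K) (v + w) y) ∂(gaussianReal 0 1).prod (gaussianReal 0 1)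
      = ∫ ξ, gaussianPDFReal (ξ * √K) (v + w) y * log (gaussianPDFReal (ξ * √K) (v + w) y)
          ∂gaussianReal 0 1 := fun y =>
    integral_prod_gaussianPDFReal_add_mul_sqrt (g := fun ξ => ξ * √K) hv w (by fun_prop)
      (integrable_log_gaussianPDFReal_comp hV ((memLp_id_gaussianReal 2).mul_const _)
        (memLp_const y)) y
  have hcentre : ∀ y ξ, gaussianPDFReal (ξ * √K) (v + w) y
      = gaussianPDFReal 0 (v + w) (y - ξ * √K) := fun y ξ => by
    rw [gaussianPDFReal_sub, zero_add]
  simp only [hPout, hsqrt, integral_gaussianPDFReal_add_mul_sqrt hv, hfubini]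
  simp only [hcentre]
  rw [integral_integral_comp_sub (integrable_gaussianPDFReal_mul_log hV)
    (by fun_prop) (by fun_prop), integral_gaussianPDFReal_mul_log hV, hvw]

/-- For the Gaussian output channel `P_out(y|λ) = exp(−(y−λ)²/(2Δ))/√(2πΔ)`, the
replica-symmetric energetic potential
`φ(K;K_d) = ∫ dy E_{ξ,u⁰} P_out(y|ξ√K + u⁰√(K_d−K)) ln E_u P_out(y|ξ√K + u√(K_d−K))`
equals `−(1/2) ln[2πe(Δ + K_d − K)]`. -/
theorem gaussian_channel_energetic_potential (Δ K Kd : ℝ)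
    (hΔ : 0 < Δ) (hK : 0 ≤ K) (hKKd : K ≤ Kd) :
    let Pout : ℝ → ℝ → ℝ :=
      fun y lam => Real.exp (-(y - lam) ^ 2 / (2 * Δ)) / Real.sqrt (2 * Real.pi * Δ)
    ∫ y : ℝ, ∫ p : ℝ × ℝ,
        Pout y (p.1 * Real.sqrt K + p.2 * Real.sqrt (Kd - K)) *
          Real.log (∫ u, Pout y (p.1 * Real.sqrt K + u * Real.sqrt (Kd - K))
            ∂(gaussianReal 0 1))
      ∂((gaussianReal 0 1).prod (gaussianReal 0 1))
      = -(1 / 2) * Real.log (2 * Real.pi * Real.exp 1 * (Δ + Kd - K)) :=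
  gaussian_channel_energetic_potential_general Δ K Kd hΔ hKKd
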